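/- arXiv:2411.10339 — 2 statements merged into one kernel-verified Lean document; each statement's English description precedes it below -/
import Mathlib

section
/- Let λ_p, λ_q ∈ ℂ with 0 < |λ_p| < 1. Let φ : ℂ → ℂ be a bijection such that φ and φ⁻¹ are real-analytic (analytic as maps ℝ² → ℝ²), with φ(0) = 0 and φ(λ_p·ζ) = λ_q·φ(ζ) for all ζ ∈ ℂ. Then: (1) φ is ℝ-linear; (2) λ_q = λ_p or λ_q = conj(λ_p); (3) if λ_p is not real, then there exists α ∈ ℂ \ {0} such that either φ(ζ) = α·ζ for all ζ and λ_q = λ_p, or φ(ζ) = α·conj(ζ) for all ζ and λ_q = conj(λ_p). -/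
open Function

/-- a real-analytic conjugacy between the contracting linear maps
`ζ ↦ λ_p ζ` and `ζ ↦ λ_q ζ` fixing the origin is `ℝ`-linear, forces `λ_q = λ_p` or
`λ_q = conj(λ_p)`, and if `λ_p` is non-real, is `ℂ`-linear or `ℂ`-antilinear
accordingly. -/
theorem real_analytic_linearization_conjugacy
    (lp lq : ℂ) (hp0 : 0 < ‖lp‖) (hp1 : ‖lp‖ < 1)
    (φ φinv : ℂ → ℂ)
    (hleft : ∀ ζ, φinv (φ ζ) = ζ) (hright : ∀ ζ, φ (φinv ζ) = ζ)
    (hφan : ∀ ζ, AnalyticAt ℝ φ ζ) (hφinvan : ∀ ζ, AnalyticAt ℝ φinv ζ)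
    (h0 : φ 0 = 0) (hconj : ∀ ζ, φ (lp * ζ) = lq * φ ζ) :
    IsLinearMap ℝ φ ∧
    (lq = lp ∨ lq = starRingEnd ℂ lp) ∧
    (lp.im ≠ 0 → ∃ α : ℂ, α ≠ 0 ∧
      (((∀ ζ, φ ζ = α * ζ) ∧ lq = lp) ∨
        ((∀ ζ, φ ζ = α * starRingEnd ℂ ζ) ∧ lq = starRingEnd ℂ lp))) := by
  have hinj : Function.Injective φ := Function.LeftInverse.injective hleft
  have hlp0 : lp ≠ 0 := by
    intro h; rw [h, norm_zero] at hp0; exact lt_irrefl 0 hp0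
  have hlq0 : lq ≠ 0 := by
    intro h
    have h1 : φ lp = 0 := by
      have := hconj 1; rw [h, zero_mul, mul_one] at this; exact this
    exact hlp0 (hinj (h1.trans h0.symm))
  set D := fderiv ℝ φ 0 with hDdef
  have hD : HasFDerivAt φ D 0 := (hφan 0).differentiableAt.hasFDerivAt
  set E := fderiv ℝ φinv 0 with hEdef
  have hE : HasFDerivAt φinv E 0 := (hφinvan 0).differentiableAt.hasFDerivAt
  have hED : E.comp D = ContinuousLinearMap.id ℝ ℂ := by
    have hc : HasFDerivAt (φinv ∘ φ) (E.comp D) 0 := by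
      refine HasFDerivAt.comp 0 ?_ hD
      rw [h0]; exact hE
    have hid : HasFDerivAt (φinv ∘ φ) (ContinuousLinearMap.id ℝ ℂ) 0 := by
      have h : (φinv ∘ φ) = id := funext hleft
      rw [h]; exact hasFDerivAt_id 0
    exact hc.unique hid
  have hDinj : Function.Injective D := by
    intro x y h
    have h2 := congrArg E h
    calc x = (E.comp D) x := by rw [hED]; rfl
    _ = (E.comp D) y := by simpa using h2
    _ = y := by rw [hED]; rfl
  -- derivative relation
  have hDrel : ∀ ζ, D (lp * ζ) = lq * D ζ := by
    have hL : HasFDerivAt (fun ζ => φ (lp * ζ))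
        (D.comp (ContinuousLinearMap.mul ℝ ℂ lp)) 0 := by
      have h1 : HasFDerivAt (fun ζ : ℂ => lp * ζ) (ContinuousLinearMap.mul ℝ ℂ lp) 0 :=
        (ContinuousLinearMap.mul ℝ ℂ lp).hasFDerivAt
      have h2 : HasFDerivAt φ D (lp * 0) := by rw [mul_zero]; exact hD
      exact h2.comp 0 h1
    have hR : HasFDerivAt (fun ζ => lq * φ ζ)
        ((ContinuousLinearMap.mul ℝ ℂ lq).comp D) 0 := by
      have h1 : HasFDerivAt (fun w : ℂ => lq * w) (ContinuousLinearMap.mul ℝ ℂ lq) (φ 0) :=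
        (ContinuousLinearMap.mul ℝ ℂ lq).hasFDerivAt
      exact h1.comp 0 hD
    have heq : (fun ζ => φ (lp * ζ)) = fun ζ => lq * φ ζ := funext hconj
    rw [heq] at hL
    have huniq := hL.unique hR
    intro ζ
    have := congrArg (fun T : ℂ →L[ℝ] ℂ => T ζ) huniq
    simpa using this
  set u := D 1 with hu
  set v := D Complex.I with hv
  have hu0 : u ≠ 0 := fun h => one_ne_zero (hDinj (h.trans (map_zero D).symm))
  set a := (u - Complex.I * v) / 2 with ha
  set b := (u + Complex.I * v) / 2 with hb
  have hDlin : ∀ ζ : ℂ, D ζ = (ζ.re : ℂ) * u + (ζ.im : ℂ) * v := by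
    intro ζ
    have h3 : ζ = ζ.re • (1 : ℂ) + ζ.im • Complex.I := by
      rw [Complex.real_smul, Complex.real_smul, mul_one]
      exact (Complex.re_add_im ζ).symm
    conv_lhs => rw [h3]
    rw [map_add, map_smul, map_smul]
    simp [Complex.real_smul, hu, hv]
  have hlp_eq : (lp.re : ℂ) + lp.im * Complex.I = lp := Complex.re_add_im lp
  have h1 : (lp.re : ℂ) * u + (lp.im : ℂ) * v = lq * u := by
    have h := hDrel 1
    rw [mul_one] at h
    rw [← h, hDlin lp]
  have h2 : -(lp.im : ℂ) * u + (lp.re : ℂ) * v = lq * v := by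
    have h := hDrel Complex.I
    rw [← h, hDlin (lp * Complex.I)]
    simp
  have haeq : lq * a = lp * a := by
    rw [ha, ← hlp_eq]
    linear_combination (-h1 + Complex.I * h2) / 2 + ((lp.im : ℂ) * v / 2) * Complex.I_sq
  have hclp : (starRingEnd ℂ) lp = (lp.re : ℂ) - lp.im * Complex.I := by
    apply Complex.ext <;> simp
  have hbeq : lq * b = (starRingEnd ℂ) lp * b := by
    rw [hb, hclp]
    linear_combination (-h1 - Complex.I * h2) / 2 + ((lp.im : ℂ) * v / 2) * Complex.I_sq
  have huab : u = a + b := by rw [ha, hb]; ring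
  have hab : a ≠ 0 ∨ b ≠ 0 := by
    by_contra h
    push_neg at h
    exact hu0 (by rw [huab, h.1, h.2, add_zero])
  have hlq_cases : lq = lp ∨ lq = starRingEnd ℂ lp := by
    rcases hab with h | h
    · exact Or.inl (mul_right_cancel₀ h haeq)
    · exact Or.inr (mul_right_cancel₀ h hbeq)
  have hnq : ‖lq‖ = ‖lp‖ := by
    rcases hlq_cases with h | h
    · rw [h]
    · rw [h]; exact RCLike.norm_conj lp
  -- iterates
  have hφiter : ∀ (k : ℕ) (ζ : ℂ), φ (lp ^ k * ζ) = lq ^ k * φ ζ := by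
    intro k
    induction k with
    | zero => intro ζ; simp
    | succ n ih =>
      intro ζ
      rw [pow_succ, pow_succ, mul_assoc, ih (lp * ζ), hconj, mul_assoc]
  have hDiter : ∀ (k : ℕ) (ζ : ℂ), D (lp ^ k * ζ) = lq ^ k * D ζ := by
    intro k
    induction k with
    | zero => intro ζ; simp
    | succ n ih =>
      intro ζ
      rw [pow_succ, pow_succ, mul_assoc, ih (lp * ζ), hDrel, mul_assoc]
  -- φ = D
  have hφD : ∀ ζ, φ ζ = D ζ := by
    intro ζ
    rcases eq_or_ne ζ 0 with rfl | hζ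
    · rw [h0, map_zero]
    have key : ∀ ε > (0 : ℝ), ‖φ ζ - D ζ‖ ≤ ε * ‖ζ‖ := by
      intro ε hε
      have hlo := hasFDerivAt_iff_isLittleO_nhds_zero.mp hD
      have hev := hlo.def hε
      rw [Metric.eventually_nhds_iff] at hev
      obtain ⟨δ, hδ, hball⟩ := hev
      -- choose k with ‖lp‖^k * ‖ζ‖ < δ
      have htend : Filter.Tendsto (fun k : ℕ => ‖lp‖ ^ k * ‖ζ‖) Filter.atTop (nhds 0) := by
        have := tendsto_pow_atTop_nhds_zero_of_lt_one (le_of_lt hp0) hp1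
        simpa using this.mul_const ‖ζ‖
      obtain ⟨k, hk⟩ := (htend.eventually (gt_mem_nhds hδ)).exists
      set w := lp ^ k * ζ with hw
      have hwn : ‖w‖ = ‖lp‖ ^ k * ‖ζ‖ := by
        rw [hw, norm_mul, norm_pow]
      have hwd : dist w 0 < δ := by
        rw [dist_zero_right, hwn]; exact hk
      have hbd := hball hwd
      simp only [zero_add, h0, sub_zero] at hbd
      -- hbd : ‖φ w - D w‖ ≤ ε * ‖w‖
      rw [hw, hφiter k ζ, hDiter k ζ, ← mul_sub, norm_mul, norm_pow, hnq, hwn] at hbd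
      have hpk : (0 : ℝ) < ‖lp‖ ^ k := pow_pos hp0 k
      have h2' : ‖lp‖ ^ k * ‖φ ζ - D ζ‖ ≤ ‖lp‖ ^ k * (ε * ‖ζ‖) := by
        nlinarith [hbd]
      exact le_of_mul_le_mul_left h2' hpk
    have hle : ‖φ ζ - D ζ‖ ≤ 0 := by
      by_contra h
      push_neg at h
      have hζn : (0 : ℝ) < ‖ζ‖ := norm_pos_iff.mpr hζ
      have hk := key (‖φ ζ - D ζ‖ / (2 * ‖ζ‖)) (by positivity)
      have heq : ‖φ ζ - D ζ‖ / (2 * ‖ζ‖) * ‖ζ‖ = ‖φ ζ - D ζ‖ / 2 := by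
        rw [div_mul_eq_mul_div, mul_comm (2 : ℝ) ‖ζ‖, ← div_div, mul_div_assoc,
          div_self (ne_of_gt hζn), mul_one]
      rw [heq] at hk
      linarith
    have : φ ζ - D ζ = 0 := by
      rw [← norm_le_zero_iff]; exact hle
    exact sub_eq_zero.mp this
  have hDform : ∀ ζ : ℂ, D ζ = a * ζ + b * (starRingEnd ℂ) ζ := by
    intro ζ
    have hcζ : (starRingEnd ℂ) ζ = (ζ.re : ℂ) - ζ.im * Complex.I := by
      apply Complex.ext <;> simp
    have h3 : ζ = (ζ.re : ℂ) + ζ.im * Complex.I := (Complex.re_add_im ζ).symm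
    rw [hDlin ζ, hcζ, ha, hb]
    linear_combination (-(u - Complex.I * v) / 2) * h3 + ((ζ.im : ℂ) * v) * Complex.I_sq
  refine ⟨⟨fun x y => by rw [hφD, hφD, hφD, map_add],
    fun c x => by rw [hφD, hφD, map_smul]⟩, hlq_cases, ?_⟩
  intro him
  have hne : (starRingEnd ℂ) lp ≠ lp := by
    intro h
    exact him (Complex.conj_eq_iff_im.mp h)
  by_cases hA : a = 0
  · have hbne : b ≠ 0 := by
      rcases hab with h | h
      · exact absurd hA h
      · exact h
    have hlq : lq = starRingEnd ℂ lp := mul_right_cancel₀ hbne hbeq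
    refine ⟨b, hbne, Or.inr ⟨fun ζ => ?_, hlq⟩⟩
    rw [hφD, hDform, hA, zero_mul, zero_add]
  · have hlq : lq = lp := mul_right_cancel₀ hA haeq
    have hbz : b = 0 := by
      by_contra hB
      have h := mul_right_cancel₀ hB hbeq
      exact hne (by rw [← h, hlq])
    refine ⟨a, hA, Or.inl ⟨fun ζ => ?_, hlq⟩⟩
    rw [hφD, hDform, hbz, zero_mul, add_zero]
end

section
/- Let d be a real number with d > 1, let c be a real number with 0 < c ≤ 1, and let λ ∈ ℂ. Define u : ℂ → ℝ by u(ζ) = Im(ζ) if Im(ζ) ≥ 0 and u(ζ) = −c·Im(ζ) if Im(ζ) < 0. If u(λ·ζ) = d·u(ζ) for all ζ ∈ ℂ, then either λ = d, or λ = −d and c = 1. -/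
/-- if `u(ζ) = Im ζ` on the upper half-plane and `u(ζ) = −c·Im ζ` on the
lower half-plane (`0 < c ≤ 1`, `d > 1`) satisfies `u(λζ) = d·u(ζ)` for all `ζ`, then
`λ = d`, or `λ = −d` and `c = 1`. -/
theorem unstably_linear_multiplier_functional_equation
    (d : ℝ) (hd : 1 < d) (c : ℝ) (hc0 : 0 < c) (hc1 : c ≤ 1) (lam : ℂ)
    (u : ℂ → ℝ)
    (hu : ∀ ζ : ℂ, u ζ = if 0 ≤ ζ.im then ζ.im else -c * ζ.im)
    (heq : ∀ ζ : ℂ, u (lam * ζ) = d * u ζ) :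
    lam = (d : ℂ) ∨ (lam = -(d : ℂ) ∧ c = 1) := by
  have h1 : u 1 = 0 := by rw [hu]; simp
  have hl0 : lam.im = 0 := by
    have h := heq 1
    rw [mul_one, h1, mul_zero, hu] at h
    split_ifs at h with hi
    · exact h
    · nlinarith
  have hI : u Complex.I = 1 := by rw [hu]; simp
  have hi : (lam * Complex.I).im = lam.re := by simp [Complex.mul_im]
  have hI' : u (lam * Complex.I) = d := by rw [heq, hI, mul_one]
  rw [hu, hi] at hI'
  rcases le_or_gt 0 lam.re with ha | ha
  · left
    rw [if_pos ha] at hI'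
    exact Complex.ext (by simpa using hI') (by simpa using hl0)
  · right
    rw [if_neg (not_le.mpr ha)] at hI'
    have hmI : u (-Complex.I) = c := by rw [hu]; simp
    have hi2 : (lam * -Complex.I).im = -lam.re := by simp [Complex.mul_im]
    have h2 : u (lam * -Complex.I) = d * c := by rw [heq, hmI]
    rw [hu, hi2, if_pos (by linarith)] at h2
    have hc : c = 1 := by nlinarith
    refine ⟨Complex.ext ?_ (by simpa using hl0), hc⟩
    rw [hc] at hI'
    simpa using by linarith [hI']
end
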